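/- Let κ > 0 and u₀ ∈ S^{d-1}, and take ρ̂ ∈ ℝ and û ∈ ℝ^d with û·u₀ = 0. Define f̂₁(ω) = M_{u₀}(ω)(ρ̂ + (ω·u₀)(ω·û)) and its Q-tensor Q_{f̂₁} = ∫_{S^{d-1}} f̂₁(ω) (ω⊗ω − (1/d)·Id) dσ(ω). Then, with λ∥ = ∫ M_{u₀}(ω·u₀)² dσ − 1/d and λ⊥ = −λ∥/(d−1), one has P_{u₀⊥}(Q_{f̂₁} u₀) = ((λ∥ − λ⊥)/κ) û, where P_{u₀⊥} = Id − u₀⊗u₀. -/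

import Mathlib

/-!
Write `a = ω·u₀` and `e(a) = exp (κ a² / 2)`. The reflection of the sphere exchanging two unit
vectors orthogonal to `u₀` fixes `a`; hence `∫ G(a) (ω·w) = 0` and, summing over the projections
of the coordinate vectors onto `u₀⊥`, `(d - 1) ∫ G(a) (ω·v)(ω·w) = (v·w) ∫ G(a) (1 - a²)` for all
`v, w ⊥ u₀`. Differentiating the integral along the rotations of a plane containing `u₀` gives the
integration by parts `(d - 1) ∫ a φ(a) = ∫ φ'(a) (1 - a²)`, and `φ(a) = a e(a)` turns it into
`κ ∫ e(a) a² (1 - a²) = d ∫ e(a) a² - Z`. The `u₀⊥`-component of `Q_{f̂₁} u₀` along `w` is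
`Z⁻¹ ∫ e(a) a² (ω·û)(ω·w)`, which these two identities evaluate to `((λ∥ - λ⊥)/κ) (û·w)`.
-/

open MeasureTheory Metric
open scoped RealInnerProductSpace

/-- The map induced on the unit sphere by a linear isometry of `EuclideanSpace ℝ (Fin d)`. -/
noncomputable def sphereRot {d : ℕ}
    (e : EuclideanSpace ℝ (Fin d) ≃ₗᵢ[ℝ] EuclideanSpace ℝ (Fin d))
    (ω : sphere (0 : EuclideanSpace ℝ (Fin d)) 1) :
    sphere (0 : EuclideanSpace ℝ (Fin d)) 1 :=
  ⟨e ω, by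
    have hω := ω.2
    simp only [mem_sphere_iff_norm, sub_zero] at hω ⊢
    rw [e.norm_map]
    exact hω⟩

theorem Continuous.integrable_of_compactSpace {X : Type*} [TopologicalSpace X] [CompactSpace X]
    [MeasurableSpace X] [OpensMeasurableSpace X] {μ : Measure X} [IsFiniteMeasure μ]
    {g : X → ℝ} (hg : Continuous g) : Integrable g μ :=
  hg.integrable_of_hasCompactSupport (HasCompactSupport.of_compactSpace g)

section Flow

variable {X : Type*} [TopologicalSpace X] [CompactSpace X] [MeasurableSpace X] [BorelSpace X]
  {μ : Measure X}

theorem integral_comp_eq_of_map_eq {R : X → X} (hR : Continuous R) (hμ : μ.map R = μ)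
    {g : X → ℝ} (hg : Continuous g) : ∫ x, g (R x) ∂μ = ∫ x, g x ∂μ := by
  conv_rhs => rw [← hμ]
  exact (integral_map hR.aemeasurable hg.aestronglyMeasurable_of_compactSpace).symm

theorem integral_eq_zero_of_hasDerivAt_flow [IsFiniteMeasure μ]
    {R : ℝ → X → X} (hR : ∀ t, Continuous (R t)) (hμ : ∀ t, μ.map (R t) = μ)
    {Ψ Ψ' : X → ℝ} (hΨ : Continuous Ψ) (hΨ' : Continuous Ψ')
    (hderiv : ∀ x t, HasDerivAt (fun s => Ψ (R s x)) (Ψ' (R t x)) t) :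
    ∫ x, Ψ' x ∂μ = 0 := by
  obtain ⟨C, hC⟩ := isCompact_univ.exists_bound_of_continuousOn hΨ'.continuousOn
  have hasDeriv := (hasDerivAt_integral_of_dominated_loc_of_deriv_le (μ := μ) (x₀ := 0)
    (F := fun t x => Ψ (R t x)) (F' := fun t x => Ψ' (R t x)) (bound := fun _ => C)
    Filter.univ_mem
    (Filter.Eventually.of_forall fun t => (hΨ.comp (hR t)).aestronglyMeasurable_of_compactSpace)
    (hΨ.comp (hR 0)).integrable_of_compactSpace
    (hΨ'.comp (hR 0)).aestronglyMeasurable_of_compactSpace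
    (Filter.Eventually.of_forall fun x t _ => hC _ (Set.mem_univ _)) (integrable_const C)
    (Filter.Eventually.of_forall fun x t _ => hderiv x t)).2
  have hconst : (fun t => ∫ x, Ψ (R t x) ∂μ) = fun _ => ∫ x, Ψ x ∂μ :=
    funext fun t => integral_comp_eq_of_map_eq (hR t) (hμ t) hΨ
  rw [hconst, integral_comp_eq_of_map_eq (hR 0) (hμ 0) hΨ'] at hasDeriv
  exact hasDeriv.unique (hasDerivAt_const 0 _)

end Flow

section PlaneRotation

variable {E : Type*} [NormedAddCommGroup E] [InnerProductSpace ℝ E]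

theorem exists_norm_eq_one_inner_eq_zero [FiniteDimensional ℝ E] (hE : 2 ≤ Module.finrank ℝ E)
    (u : E) : ∃ n : E, ‖n‖ = 1 ∧ ⟪u, n⟫ = 0 := by
  have hne : (ℝ ∙ u)ᗮ ≠ ⊥ := by
    intro hbot
    have hsum := Submodule.finrank_add_finrank_orthogonal (ℝ ∙ u)
    have hspan := finrank_span_le_card ({u} : Set E) (R := ℝ)
    rw [hbot, finrank_bot, add_zero] at hsum
    simp only [Set.toFinset_singleton, Finset.card_singleton] at hspan
    omega
  obtain ⟨v, hv, hv0⟩ := Submodule.exists_mem_ne_zero_of_ne_bot hne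
  refine ⟨‖v‖⁻¹ • v, norm_smul_inv_norm hv0, ?_⟩
  rw [inner_smul_right, Submodule.mem_orthogonal_singleton_iff_inner_right.1 hv, mul_zero]

/-- Rotation by the angle `t` in the plane spanned by `u` and `n`, from `u` towards `n`. -/
noncomputable def planeRotationLinearMap (u n : E) (t : ℝ) : E →ₗ[ℝ] E where
  toFun x := x + ((Real.cos t - 1) * ⟪u, x⟫ + Real.sin t * ⟪n, x⟫) • u
      + ((Real.cos t - 1) * ⟪n, x⟫ - Real.sin t * ⟪u, x⟫) • n
  map_add' x y := by
    simp only [inner_add_right]; module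
  map_smul' c x := by
    simp only [inner_smul_right, RingHom.id_apply]; module

variable {u n : E} (hu : ‖u‖ = 1) (hn : ‖n‖ = 1) (hun : ⟪u, n⟫ = 0)
include hu hn hun

theorem inner_planeRotationLinearMap (t : ℝ) (x y : E) :
    ⟪planeRotationLinearMap u n t x, planeRotationLinearMap u n t y⟫ = ⟪x, y⟫ := by
  have huu : ⟪u, u⟫ = 1 := by rw [real_inner_self_eq_norm_sq, hu, one_pow]
  have hnn : ⟪n, n⟫ = 1 := by rw [real_inner_self_eq_norm_sq, hn, one_pow]
  simp only [planeRotationLinearMap, LinearMap.coe_mk, AddHom.coe_mk, inner_add_left,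
    inner_add_right, real_inner_smul_left, real_inner_smul_right, huu, hnn,
    real_inner_comm u n, hun, real_inner_comm x u, real_inner_comm x n, real_inner_comm y u,
    real_inner_comm y n]
  linear_combination (⟪x, u⟫ * ⟪y, u⟫ + ⟪x, n⟫ * ⟪y, n⟫) * Real.sin_sq_add_cos_sq t

variable [FiniteDimensional ℝ E]

noncomputable def planeRotation (t : ℝ) : E ≃ₗᵢ[ℝ] E :=
  ((planeRotationLinearMap u n t).isometryOfInner
    (inner_planeRotationLinearMap hu hn hun t)).toLinearIsometryEquiv rfl

theorem inner_planeRotation_fst (t : ℝ) (x : E) :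
    ⟪planeRotation hu hn hun t x, u⟫ = Real.cos t * ⟪x, u⟫ + Real.sin t * ⟪x, n⟫ := by
  have huu : ⟪u, u⟫ = 1 := by rw [real_inner_self_eq_norm_sq, hu, one_pow]
  simp only [planeRotation, LinearIsometry.coe_toLinearIsometryEquiv,
    LinearMap.coe_isometryOfInner, planeRotationLinearMap, LinearMap.coe_mk, AddHom.coe_mk,
    inner_add_left, real_inner_smul_left, huu, real_inner_comm u n, hun, real_inner_comm x u,
    real_inner_comm x n]
  ring

theorem inner_planeRotation_snd (t : ℝ) (x : E) :
    ⟪planeRotation hu hn hun t x, n⟫ = Real.cos t * ⟪x, n⟫ - Real.sin t * ⟪x, u⟫ := by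
  have hnn : ⟪n, n⟫ = 1 := by rw [real_inner_self_eq_norm_sq, hn, one_pow]
  simp only [planeRotation, LinearIsometry.coe_toLinearIsometryEquiv,
    LinearMap.coe_isometryOfInner, planeRotationLinearMap, LinearMap.coe_mk, AddHom.coe_mk,
    inner_add_left, real_inner_smul_left, hnn, hun, real_inner_comm x u, real_inner_comm x n]
  ring

end PlaneRotation

section Coordinates

variable {d : ℕ}

theorem inner_single_sub_smul (x u : EuclideanSpace ℝ (Fin d)) (i : Fin d) :
    ⟪x, EuclideanSpace.single i 1 - u i • u⟫ = x i - u i * ⟪x, u⟫ := by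
  simp [inner_sub_right, real_inner_smul_right, EuclideanSpace.inner_single_right]

theorem sum_mul_eq_inner (x y : EuclideanSpace ℝ (Fin d)) : ∑ i, x i * y i = ⟪x, y⟫ := by
  simp [PiLp.inner_apply, mul_comm]

variable {u : EuclideanSpace ℝ (Fin d)} (hu : ‖u‖ = 1)
include hu

theorem inner_single_sub_smul_eq_zero (i : Fin d) :
    ⟪u, EuclideanSpace.single i 1 - u i • u⟫ = 0 := by
  rw [inner_single_sub_smul, real_inner_self_eq_norm_sq, hu]
  ring

theorem sum_inner_single_sub_smul_sq (x : EuclideanSpace ℝ (Fin d)) :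
    ∑ i, ⟪x, EuclideanSpace.single i 1 - u i • u⟫ ^ 2 = ‖x‖ ^ 2 - ⟪x, u⟫ ^ 2 := by
  calc ∑ i, ⟪x, EuclideanSpace.single i 1 - u i • u⟫ ^ 2
      = ∑ i, (x i * x i - 2 * ⟪x, u⟫ * (x i * u i) + ⟪x, u⟫ ^ 2 * (u i * u i)) :=
        Finset.sum_congr rfl fun i _ => by rw [inner_single_sub_smul]; ring
    _ = ⟪x, x⟫ - 2 * ⟪x, u⟫ * ⟪x, u⟫ + ⟪x, u⟫ ^ 2 * ⟪u, u⟫ := by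
        simp only [Finset.sum_add_distrib, Finset.sum_sub_distrib, ← Finset.mul_sum,
          sum_mul_eq_inner]
    _ = ‖x‖ ^ 2 - ⟪x, u⟫ ^ 2 := by
        rw [real_inner_self_eq_norm_sq, real_inner_self_eq_norm_sq, hu]; ring

theorem sum_norm_single_sub_smul_sq :
    ∑ i : Fin d, ‖EuclideanSpace.single i 1 - u i • u‖ ^ 2 = (d : ℝ) - 1 := by
  have hW : ∀ i, ‖EuclideanSpace.single i 1 - u i • u‖ ^ 2 = 1 - u i * u i := fun i => by
    rw [← real_inner_self_eq_norm_sq, inner_single_sub_smul, real_inner_comm,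
      inner_single_sub_smul_eq_zero hu]
    simp
  simp only [hW, Finset.sum_sub_distrib, Finset.sum_const, Finset.card_univ, Fintype.card_fin,
    nsmul_eq_mul, mul_one, sum_mul_eq_inner, real_inner_self_eq_norm_sq, hu, one_pow]

end Coordinates

theorem continuous_sphereRot {d : ℕ}
    (e : EuclideanSpace ℝ (Fin d) ≃ₗᵢ[ℝ] EuclideanSpace ℝ (Fin d)) : Continuous (sphereRot e) :=
  (e.continuous.comp continuous_subtype_val).subtype_mk _

@[simp]
theorem coe_sphereRot {d : ℕ} (e : EuclideanSpace ℝ (Fin d) ≃ₗᵢ[ℝ] EuclideanSpace ℝ (Fin d))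
    (ω : sphere (0 : EuclideanSpace ℝ (Fin d)) 1) :
    (sphereRot e ω : EuclideanSpace ℝ (Fin d)) = e ω :=
  rfl

section InvariantMeasure

variable {d : ℕ} {σ : Measure (sphere (0 : EuclideanSpace ℝ (Fin d)) 1)}
  (hσ : ∀ e : EuclideanSpace ℝ (Fin d) ≃ₗᵢ[ℝ] EuclideanSpace ℝ (Fin d), σ.map (sphereRot e) = σ)
include hσ

/-- The reflection in the hyperplane orthogonal to `y₁ - y₂` fixes `x` and swaps `y₁`, `y₂`. -/
theorem integral_mul_inner_eq_of_norm_eq {x y₁ y₂ : EuclideanSpace ℝ (Fin d)}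
    (hnorm : ‖y₁‖ = ‖y₂‖) (hinner : ⟪x, y₁⟫ = ⟪x, y₂⟫) {G H : ℝ → ℝ} (hG : Continuous G)
    (hH : Continuous H) :
    ∫ ω, G ⟪↑ω, x⟫ * H ⟪↑ω, y₁⟫ ∂σ = ∫ ω, G ⟪↑ω, x⟫ * H ⟪↑ω, y₂⟫ ∂σ := by
  set e := (ℝ ∙ (y₁ - y₂))ᗮ.reflection
  have hex : e x = x := Submodule.reflection_mem_subspace_eq_self
    (Submodule.mem_orthogonal_singleton_iff_inner_right.2 (by rw [inner_sub_left,
      real_inner_comm x, real_inner_comm x, hinner, sub_self]))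
  have hey : e y₁ = y₂ := Submodule.reflection_sub hnorm
  set g : sphere (0 : EuclideanSpace ℝ (Fin d)) 1 → ℝ := fun ω => G ⟪↑ω, x⟫ * H ⟪↑ω, y₂⟫
  have hrot : ∀ ω : sphere (0 : EuclideanSpace ℝ (Fin d)) 1,
      G ⟪↑ω, x⟫ * H ⟪↑ω, y₁⟫ = g (sphereRot e ω) := fun ω => by
    have h₁ : ⟪e ω, x⟫ = ⟪↑ω, x⟫ := by rw [← e.inner_map_map ω x, hex]
    have h₂ : ⟪e ω, y₂⟫ = ⟪↑ω, y₁⟫ := by rw [← hey, e.inner_map_map]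
    simp only [g, sphereRot, h₁, h₂]
  simp_rw [hrot]
  exact integral_comp_eq_of_map_eq (continuous_sphereRot e) (hσ e) (by fun_prop)

theorem integral_mul_inner_eq_zero {u v : EuclideanSpace ℝ (Fin d)} (huv : ⟪u, v⟫ = 0)
    {G : ℝ → ℝ} (hG : Continuous G) :
    ∫ ω, G ⟪↑ω, u⟫ * ⟪↑ω, v⟫ ∂σ = 0 := by
  have h := integral_mul_inner_eq_of_norm_eq hσ (norm_neg v).symm
    (by rw [inner_neg_right, huv, neg_zero]) hG continuous_id
  simp only [id, inner_neg_right, mul_neg, integral_neg] at h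
  linarith

theorem norm_sq_mul_integral_mul_inner_sq_comm {u v w : EuclideanSpace ℝ (Fin d)}
    (huv : ⟪u, v⟫ = 0) (huw : ⟪u, w⟫ = 0) {G : ℝ → ℝ} (hG : Continuous G) :
    ‖w‖ ^ 2 * ∫ ω, G ⟪↑ω, u⟫ * ⟪↑ω, v⟫ ^ 2 ∂σ = ‖v‖ ^ 2 * ∫ ω, G ⟪↑ω, u⟫ * ⟪↑ω, w⟫ ^ 2 ∂σ := by
  have h := integral_mul_inner_eq_of_norm_eq hσ (x := u) (y₁ := ‖w‖ • v) (y₂ := ‖v‖ • w)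
    (by simp only [norm_smul, norm_norm, mul_comm]) (by simp [inner_smul_right, huv, huw])
    hG (continuous_pow 2)
  simp only [inner_smul_right, mul_pow, mul_left_comm _ (‖_‖ ^ 2), integral_const_mul] at h
  exact h

variable [IsFiniteMeasure σ]

theorem sub_one_mul_integral_mul_inner_sq {u v : EuclideanSpace ℝ (Fin d)} (hu : ‖u‖ = 1)
    (huv : ⟪u, v⟫ = 0) {G : ℝ → ℝ} (hG : Continuous G) :
    ((d : ℝ) - 1) * ∫ ω, G ⟪↑ω, u⟫ * ⟪↑ω, v⟫ ^ 2 ∂σ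
      = ‖v‖ ^ 2 * ∫ ω, G ⟪↑ω, u⟫ * (1 - ⟪↑ω, u⟫ ^ 2) ∂σ := by
  have hsphere : ∀ ω : sphere (0 : EuclideanSpace ℝ (Fin d)) 1,
      ∑ i, G ⟪↑ω, u⟫ * ⟪(ω : EuclideanSpace ℝ (Fin d)), EuclideanSpace.single i 1 - u i • u⟫ ^ 2
        = G ⟪↑ω, u⟫ * (1 - ⟪↑ω, u⟫ ^ 2) :=
    fun ω => by rw [← Finset.mul_sum, sum_inner_single_sub_smul_sq hu, norm_eq_of_mem_sphere,
      one_pow]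
  rw [← sum_norm_single_sub_smul_sq hu, Finset.sum_mul]
  simp_rw [norm_sq_mul_integral_mul_inner_sq_comm hσ huv (inner_single_sub_smul_eq_zero hu _) hG]
  rw [← Finset.mul_sum, ← integral_finsetSum _ fun i _ =>
    Continuous.integrable_of_compactSpace (by fun_prop)]
  simp_rw [hsphere]

theorem sub_one_mul_integral_mul_inner_mul_inner {u v w : EuclideanSpace ℝ (Fin d)}
    (hu : ‖u‖ = 1) (huv : ⟪u, v⟫ = 0) (huw : ⟪u, w⟫ = 0) {G : ℝ → ℝ} (hG : Continuous G) :
    ((d : ℝ) - 1) * ∫ ω, G ⟪↑ω, u⟫ * (⟪↑ω, v⟫ * ⟪↑ω, w⟫) ∂σ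
      = ⟪v, w⟫ * ∫ ω, G ⟪↑ω, u⟫ * (1 - ⟪↑ω, u⟫ ^ 2) ∂σ := by
  have hadd := sub_one_mul_integral_mul_inner_sq hσ hu (v := v + w)
    (by rw [inner_add_right, huv, huw, add_zero]) hG
  have hsub := sub_one_mul_integral_mul_inner_sq hσ hu (v := v - w)
    (by rw [inner_sub_right, huv, huw, sub_zero]) hG
  have hpolar : ∫ ω, G ⟪↑ω, u⟫ * (⟪↑ω, v⟫ * ⟪↑ω, w⟫) ∂σ
      = ((∫ ω, G ⟪↑ω, u⟫ * ⟪↑ω, v + w⟫ ^ 2 ∂σ) - ∫ ω, G ⟪↑ω, u⟫ * ⟪↑ω, v - w⟫ ^ 2 ∂σ) / 4 := by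
    rw [← integral_sub (Continuous.integrable_of_compactSpace (by fun_prop))
      (Continuous.integrable_of_compactSpace (by fun_prop)), ← integral_div]
    congr 1 with ω
    rw [inner_add_right, inner_sub_right]
    ring
  rw [norm_add_sq_real] at hadd
  rw [norm_sub_sq_real] at hsub
  rw [hpolar]
  linear_combination (hadd - hsub) / 4

/-- The integral of `φ (ω·u) (ω·n)` is invariant under the rotations of the plane of `u` and `n`;
its derivative in the angle is the integral of `φ' (ω·u) (ω·n)² - (ω·u) φ (ω·u)`. -/
theorem integral_deriv_mul_inner_sq_eq {u n : EuclideanSpace ℝ (Fin d)} (hu : ‖u‖ = 1)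
    (hn : ‖n‖ = 1) (hun : ⟪u, n⟫ = 0) {φ φ' : ℝ → ℝ} (hφ : ∀ x, HasDerivAt φ (φ' x) x)
    (hφ' : Continuous φ') :
    ∫ ω, φ' ⟪↑ω, u⟫ * ⟪↑ω, n⟫ ^ 2 ∂σ = ∫ ω, ⟪↑ω, u⟫ * φ ⟪↑ω, u⟫ ∂σ := by
  have hφc : Continuous φ := continuous_iff_continuousAt.2 fun x => (hφ x).continuousAt
  set Ψ : sphere (0 : EuclideanSpace ℝ (Fin d)) 1 → ℝ := fun ω => φ ⟪↑ω, u⟫ * ⟪↑ω, n⟫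
  set Ψ' : sphere (0 : EuclideanSpace ℝ (Fin d)) 1 → ℝ :=
    fun ω => φ' ⟪↑ω, u⟫ * ⟪↑ω, n⟫ ^ 2 - ⟪↑ω, u⟫ * φ ⟪↑ω, u⟫
  have hderiv : ∀ ω t, HasDerivAt (fun s => Ψ (sphereRot (planeRotation hu hn hun s) ω))
      (Ψ' (sphereRot (planeRotation hu hn hun t) ω)) t := by
    intro ω t
    simp only [Ψ, Ψ', coe_sphereRot, inner_planeRotation_fst, inner_planeRotation_snd]
    set a := ⟪↑ω, u⟫
    set b := ⟪↑ω, n⟫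
    have hfst : HasDerivAt (fun s => Real.cos s * a + Real.sin s * b)
        (Real.cos t * b - Real.sin t * a) t :=
      (((Real.hasDerivAt_cos t).mul_const a).add
        ((Real.hasDerivAt_sin t).mul_const b)).congr_deriv (by ring)
    have hsnd : HasDerivAt (fun s => Real.cos s * b - Real.sin s * a)
        (-(Real.cos t * a + Real.sin t * b)) t :=
      (((Real.hasDerivAt_cos t).mul_const b).sub
        ((Real.hasDerivAt_sin t).mul_const a)).congr_deriv (by ring)
    exact (((hφ _).comp t hfst).mul hsnd).congr_deriv (by rw [Function.comp_apply]; ring)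
  have h := integral_eq_zero_of_hasDerivAt_flow (fun t => continuous_sphereRot _)
    (fun t => hσ _) (by fun_prop) (by fun_prop) hderiv
  rwa [integral_sub (Continuous.integrable_of_compactSpace (by fun_prop))
    (Continuous.integrable_of_compactSpace (by fun_prop)), sub_eq_zero] at h

theorem sub_one_mul_integral_mul_eq_integral_deriv_mul (hd : 2 ≤ d)
    {u : EuclideanSpace ℝ (Fin d)} (hu : ‖u‖ = 1) {φ φ' : ℝ → ℝ}
    (hφ : ∀ x, HasDerivAt φ (φ' x) x) (hφ' : Continuous φ') :
    ((d : ℝ) - 1) * ∫ ω, ⟪↑ω, u⟫ * φ ⟪↑ω, u⟫ ∂σ = ∫ ω, φ' ⟪↑ω, u⟫ * (1 - ⟪↑ω, u⟫ ^ 2) ∂σ := by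
  obtain ⟨n, hn, hun⟩ := exists_norm_eq_one_inner_eq_zero (by simpa using hd) u
  rw [← integral_deriv_mul_inner_sq_eq hσ hu hn hun hφ hφ',
    sub_one_mul_integral_mul_inner_sq hσ hu hun hφ', hn, one_pow, one_mul]

end InvariantMeasure

section Nematic

variable {d : ℕ} {σ : Measure (sphere (0 : EuclideanSpace ℝ (Fin d)) 1)} [IsFiniteMeasure σ]

theorem integral_mul_inner_sub_sum {f : sphere (0 : EuclideanSpace ℝ (Fin d)) 1 → ℝ}
    (hf : Continuous f) {u : EuclideanSpace ℝ (Fin d)} (hu : ‖u‖ = 1) (c : ℝ) (i : Fin d) :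
    (∫ ω, f ω * (⟪↑ω, u⟫ * (ω : EuclideanSpace ℝ (Fin d)) i - u i / c) ∂σ)
      - (∑ j, (∫ ω, f ω * (⟪↑ω, u⟫ * (ω : EuclideanSpace ℝ (Fin d)) j - u j / c) ∂σ) * u j) * u i
      = ∫ ω, f ω * (⟪↑ω, u⟫
          * ⟪(ω : EuclideanSpace ℝ (Fin d)), EuclideanSpace.single i 1 - u i • u⟫) ∂σ := by
  have hsum : ∑ j, (∫ ω, f ω * (⟪↑ω, u⟫ * (ω : EuclideanSpace ℝ (Fin d)) j - u j / c) ∂σ) * u j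
      = ∫ ω, f ω * (⟪↑ω, u⟫ ^ 2 - 1 / c) ∂σ := by
    simp_rw [← integral_mul_const]
    rw [← integral_finsetSum _ fun j _ => Continuous.integrable_of_compactSpace (by fun_prop)]
    congr 1 with ω
    calc ∑ j, f ω * (⟪↑ω, u⟫ * (ω : EuclideanSpace ℝ (Fin d)) j - u j / c) * u j
        = f ω * ⟪↑ω, u⟫ * ∑ j, (ω : EuclideanSpace ℝ (Fin d)) j * u j
          - f ω / c * ∑ j, u j * u j := by
          rw [Finset.mul_sum, Finset.mul_sum, ← Finset.sum_sub_distrib]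
          exact Finset.sum_congr rfl fun j _ => by ring
      _ = f ω * (⟪↑ω, u⟫ ^ 2 - 1 / c) := by
          rw [sum_mul_eq_inner, sum_mul_eq_inner, real_inner_self_eq_norm_sq, hu]
          ring
  rw [hsum, ← integral_mul_const,
    ← integral_sub (Continuous.integrable_of_compactSpace (by fun_prop))
      (Continuous.integrable_of_compactSpace (by fun_prop))]
  congr 1 with ω
  rw [inner_single_sub_smul]
  ring

variable (hσ : ∀ e : EuclideanSpace ℝ (Fin d) ≃ₗᵢ[ℝ] EuclideanSpace ℝ (Fin d),
  σ.map (sphereRot e) = σ)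
include hσ

theorem mul_integral_exp_mul_sq_mul_one_sub_sq (hd : 2 ≤ d) {u : EuclideanSpace ℝ (Fin d)}
    (hu : ‖u‖ = 1) (κ : ℝ) :
    κ * ∫ ω, Real.exp (κ / 2 * ⟪↑ω, u⟫ ^ 2) * ⟪↑ω, u⟫ ^ 2 * (1 - ⟪↑ω, u⟫ ^ 2) ∂σ
      = (d : ℝ) * (∫ ω, Real.exp (κ / 2 * ⟪↑ω, u⟫ ^ 2) * ⟪↑ω, u⟫ ^ 2 ∂σ)
        - ∫ ω, Real.exp (κ / 2 * ⟪↑ω, u⟫ ^ 2) ∂σ := by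
  have hφ : ∀ x : ℝ, HasDerivAt (fun x => x * Real.exp (κ / 2 * x ^ 2))
      (Real.exp (κ / 2 * x ^ 2) * (1 + κ * x ^ 2)) x := fun x =>
    ((hasDerivAt_id x).mul (((hasDerivAt_pow 2 x).const_mul (κ / 2)).exp)).congr_deriv
      (by simp only [id]; ring)
  have hibp := sub_one_mul_integral_mul_eq_integral_deriv_mul hσ hd hu hφ (by fun_prop)
  have hsq : ∫ ω, ⟪↑ω, u⟫ * (⟪↑ω, u⟫ * Real.exp (κ / 2 * ⟪↑ω, u⟫ ^ 2)) ∂σ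
      = ∫ ω, Real.exp (κ / 2 * ⟪↑ω, u⟫ ^ 2) * ⟪↑ω, u⟫ ^ 2 ∂σ := by
    congr 1 with ω
    ring
  have hsplit : ∫ ω, Real.exp (κ / 2 * ⟪↑ω, u⟫ ^ 2) * (1 + κ * ⟪↑ω, u⟫ ^ 2)
        * (1 - ⟪↑ω, u⟫ ^ 2) ∂σ
      = (∫ ω, Real.exp (κ / 2 * ⟪↑ω, u⟫ ^ 2) ∂σ)
        - (∫ ω, Real.exp (κ / 2 * ⟪↑ω, u⟫ ^ 2) * ⟪↑ω, u⟫ ^ 2 ∂σ)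
        + κ * ∫ ω, Real.exp (κ / 2 * ⟪↑ω, u⟫ ^ 2) * ⟪↑ω, u⟫ ^ 2 * (1 - ⟪↑ω, u⟫ ^ 2) ∂σ := by
    rw [← integral_sub (Continuous.integrable_of_compactSpace (by fun_prop))
      (Continuous.integrable_of_compactSpace (by fun_prop)), ← integral_const_mul,
      ← integral_add (Continuous.integrable_of_compactSpace (by fun_prop))
      (Continuous.integrable_of_compactSpace (by fun_prop))]
    congr 1 with ω
    ring
  rw [hsq, hsplit] at hibp
  linear_combination -hibp

theorem sub_one_mul_mul_integral_exp_mul_inner_mul_inner (hd : 2 ≤ d)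
    {u v w : EuclideanSpace ℝ (Fin d)} (hu : ‖u‖ = 1) (huv : ⟪u, v⟫ = 0) (huw : ⟪u, w⟫ = 0)
    (κ : ℝ) :
    ((d : ℝ) - 1) * κ
        * ∫ ω, Real.exp (κ / 2 * ⟪↑ω, u⟫ ^ 2) * ⟪↑ω, u⟫ ^ 2 * (⟪↑ω, v⟫ * ⟪↑ω, w⟫) ∂σ
      = ⟪v, w⟫ * ((d : ℝ) * (∫ ω, Real.exp (κ / 2 * ⟪↑ω, u⟫ ^ 2) * ⟪↑ω, u⟫ ^ 2 ∂σ)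
        - ∫ ω, Real.exp (κ / 2 * ⟪↑ω, u⟫ ^ 2) ∂σ) := by
  have hmoment := sub_one_mul_integral_mul_inner_mul_inner hσ hu huv huw
    (G := fun x => Real.exp (κ / 2 * x ^ 2) * x ^ 2) (by fun_prop)
  linear_combination κ * hmoment + ⟪v, w⟫ * mul_integral_exp_mul_sq_mul_one_sub_sq hσ hd hu κ

theorem integral_exp_mul_add_mul_inner {u v w : EuclideanSpace ℝ (Fin d)} (huw : ⟪u, w⟫ = 0)
    (κ ρ Z : ℝ) :
    ∫ ω, Real.exp (κ / 2 * ⟪↑ω, u⟫ ^ 2) / Z * (ρ + ⟪↑ω, u⟫ * ⟪↑ω, v⟫) * (⟪↑ω, u⟫ * ⟪↑ω, w⟫) ∂σ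
      = (∫ ω, Real.exp (κ / 2 * ⟪↑ω, u⟫ ^ 2) * ⟪↑ω, u⟫ ^ 2 * (⟪↑ω, v⟫ * ⟪↑ω, w⟫) ∂σ) / Z := by
  have hodd := integral_mul_inner_eq_zero hσ huw
    (G := fun x => Real.exp (κ / 2 * x ^ 2) * x) (by fun_prop)
  calc _ = ∫ ω, ρ / Z * (Real.exp (κ / 2 * ⟪↑ω, u⟫ ^ 2) * ⟪↑ω, u⟫ * ⟪↑ω, w⟫)
        + Real.exp (κ / 2 * ⟪↑ω, u⟫ ^ 2) * ⟪↑ω, u⟫ ^ 2 * (⟪↑ω, v⟫ * ⟪↑ω, w⟫) / Z ∂σ := by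
        congr 1 with ω
        ring
    _ = _ := by
        rw [integral_add (Continuous.integrable_of_compactSpace (by fun_prop))
          (Continuous.integrable_of_compactSpace (by fun_prop)), integral_const_mul, hodd,
          mul_zero, zero_add, integral_div]

end Nematic

/-- for `f̂₁(ω) = M_{u₀}(ω)(ρ̂ + (ω·u₀)(ω·û))` with `û ⊥ u₀`, one has
`P_{u₀⊥}(Q_{f̂₁} u₀) = ((λ∥ − λ⊥)/κ) û`, where `Qu = Q_{f̂₁} u₀` componentwise,
`λ∥ = ∫ M_{u₀}(ω·u₀)² dσ − 1/d` and `λ⊥ = −λ∥/(d−1)`. -/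
theorem stmt8 (d : ℕ) (hd : 2 ≤ d)
    (σ : Measure (sphere (0 : EuclideanSpace ℝ (Fin d)) 1))
    [IsProbabilityMeasure σ]
    (hσ : ∀ e : EuclideanSpace ℝ (Fin d) ≃ₗᵢ[ℝ] EuclideanSpace ℝ (Fin d),
      σ.map (sphereRot e) = σ)
    (κ : ℝ) (hκ : 0 < κ)
    (u₀ : sphere (0 : EuclideanSpace ℝ (Fin d)) 1)
    (ρhat : ℝ) (uhat : EuclideanSpace ℝ (Fin d))
    (huhat : ⟪uhat, (u₀ : EuclideanSpace ℝ (Fin d))⟫ = 0)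
    (Z : ℝ)
    (hZ : Z = ∫ ω, Real.exp (κ / 2 *
        ⟪(ω : EuclideanSpace ℝ (Fin d)), (u₀ : EuclideanSpace ℝ (Fin d))⟫ ^ 2) ∂σ)
    (M : sphere (0 : EuclideanSpace ℝ (Fin d)) 1 → ℝ)
    (hM : ∀ ω, M ω = Real.exp (κ / 2 *
        ⟪(ω : EuclideanSpace ℝ (Fin d)), (u₀ : EuclideanSpace ℝ (Fin d))⟫ ^ 2) / Z)
    (f₁ : sphere (0 : EuclideanSpace ℝ (Fin d)) 1 → ℝ)
    (hf₁ : ∀ ω, f₁ ω = M ω * (ρhat +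
        ⟪(ω : EuclideanSpace ℝ (Fin d)), (u₀ : EuclideanSpace ℝ (Fin d))⟫ *
        ⟪(ω : EuclideanSpace ℝ (Fin d)), uhat⟫))
    (Qu : Fin d → ℝ)
    (hQu : ∀ i, Qu i = ∫ ω, f₁ ω *
        (⟪(ω : EuclideanSpace ℝ (Fin d)), (u₀ : EuclideanSpace ℝ (Fin d))⟫ *
            (ω : EuclideanSpace ℝ (Fin d)) i -
          (u₀ : EuclideanSpace ℝ (Fin d)) i / (d : ℝ)) ∂σ)
    (lampar lamperp : ℝ)
    (hlampar : lampar = (∫ ω, M ω *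
        ⟪(ω : EuclideanSpace ℝ (Fin d)), (u₀ : EuclideanSpace ℝ (Fin d))⟫ ^ 2 ∂σ) - 1 / (d : ℝ))
    (hlamperp : lamperp = -(lampar / ((d : ℝ) - 1))) :
    ∀ i, Qu i - (∑ j, Qu j * (u₀ : EuclideanSpace ℝ (Fin d)) j) * (u₀ : EuclideanSpace ℝ (Fin d)) i
      = ((lampar - lamperp) / κ) * uhat i := by
  set u : EuclideanSpace ℝ (Fin d) := ↑u₀
  have hu : ‖u‖ = 1 := norm_eq_of_mem_sphere u₀
  have hd₁ : (1 : ℝ) < d := by exact_mod_cast hd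
  have hZ_pos : 0 < Z := hZ ▸ integral_exp_pos (Continuous.integrable_of_compactSpace (by fun_prop))
  have hMsq : ∫ ω, M ω * ⟪↑ω, u⟫ ^ 2 ∂σ
      = (∫ ω, Real.exp (κ / 2 * ⟪↑ω, u⟫ ^ 2) * ⟪↑ω, u⟫ ^ 2 ∂σ) / Z := by
    rw [← integral_div]
    congr 1 with ω
    rw [hM, div_mul_eq_mul_div]
  obtain rfl : f₁ = _ := funext hf₁
  obtain rfl : M = _ := funext hM
  intro i
  have hWi := inner_single_sub_smul_eq_zero hu i
  have huhat_i : ⟪uhat, EuclideanSpace.single i 1 - u i • u⟫ = uhat i := by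
    rw [inner_single_sub_smul, huhat, mul_zero, sub_zero]
  have key := sub_one_mul_mul_integral_exp_mul_inner_mul_inner hσ hd hu
    (by rw [real_inner_comm, huhat]) hWi κ
  rw [← hZ] at key
  simp only [hQu]
  rw [integral_mul_inner_sub_sum (by fun_prop) hu, integral_exp_mul_add_mul_inner hσ hWi,
    ← huhat_i, eq_div_of_mul_eq (mul_pos (sub_pos.2 hd₁) hκ).ne' ((mul_comm _ _).trans key),
    hlamperp, hlampar, hMsq]
  -- otherwise `field_simp` also normalizes inside the integral
  generalize (∫ ω, Real.exp (κ / 2 * ⟪↑ω, u⟫ ^ 2) * ⟪↑ω, u⟫ ^ 2 ∂σ) = I₂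
  have hd₀ : (d : ℝ) ≠ 0 := by positivity
  have hd₁' : (d : ℝ) - 1 ≠ 0 := (sub_pos.2 hd₁).ne'
  field_simp
  ring
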